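/- Let ε > 0, α_0 > 0, α_1 > 0, and assume hypotheses (H). There exists a constant C > 0, depending only on the data ε, λ, α_0, α_1, V, ΔΨ_0^pzc, ΔΨ_1^pzc, P^max, N^max, ρ_hl, the interface coefficients and T (and independent of the mesh and of Δt), such that for every mesh, every time step and every solution of the scheme (S) satisfying 0 ≤ P_i^k ≤ P^max and 0 ≤ N_i^k ≤ N^max for all i, k, one has, for u = P and u = N, Σ_{k=0}^{K−1} Δt ‖(u_h^{k+1} − u_h^k)/Δt‖_{−1,2,T}² ≤ C, where u_h^k ∈ H_T is the piecewise constant function associated with (u_i^k)_i and ‖w_h‖_{−1,2,T} = max{ ∫_0^1 w_h v_h dx : v_h ∈ H_T, ‖v_h‖_{1,T} ≤ 1 }. -/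

import Mathlib

open MeasureTheory Real Filter Topology

noncomputable section

namespace Corrosion

/-- The Bernoulli function `B(x) = x / (e^x - 1)`, `B(0) = 1`. -/
def Bern (x : ℝ) : ℝ := if x = 0 then 1 else x / (Real.exp x - 1)

/-- The two species: cations `P` and electrons `N`. -/
inductive Sp | P | N

/-- charge numbers: `z_P = 3`, `z_N = -1`. -/
def z : Sp → ℝ
  | Sp.P => 3
  | Sp.N => -1

/-- A mesh of `[0,1]`: edge points `xe 0 = x_{1/2} = 0 < xe 1 = x_{3/2} < … < xe I = x_{I+1/2} = 1`. -/
structure Mesh where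
  I : ℕ
  hI : 1 ≤ I
  xe : ℕ → ℝ
  xe0 : xe 0 = 0
  xeI : xe I = 1
  mono : ∀ j, j < I → xe j < xe (j + 1)

namespace Mesh

variable (m : Mesh)

/-- cell centers `x_i` for `1 ≤ i ≤ I` , with `x_0 = 0` and `x_{I+1} = 1`. -/
def xc (i : ℕ) : ℝ :=
  if i = 0 then 0 else if i = m.I + 1 then 1 else (m.xe (i - 1) + m.xe i) / 2

/-- `h_i = x_{i+1/2} - x_{i-1/2}` for `1 ≤ i ≤ I`. -/
def h (i : ℕ) : ℝ := m.xe i - m.xe (i - 1)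

/-- `h_{i+1/2} = x_{i+1} - x_i` for `0 ≤ i ≤ I`. -/
def hp (i : ℕ) : ℝ := m.xc (i + 1) - m.xc i

/-- mesh size `h = max_{1 ≤ i ≤ I} h_i`. -/
def size : ℝ := (Finset.Icc 1 m.I).sup' ⟨1, Finset.mem_Icc.mpr ⟨le_refl 1, m.hI⟩⟩ m.h

/-- piecewise constant function associated to a vector `(w_i)_{0 ≤ i ≤ I+1}`:
equal to `w i` on `(x_{i-1/2}, x_{i+1/2})`, to `w 0` at `x = 0`, to `w (I+1)` at `x = 1`. -/
def pw (w : ℕ → ℝ) (x : ℝ) : ℝ :=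
  if x = 0 then w 0 else if x = 1 then w (m.I + 1) else w (sInf {i : ℕ | x < m.xe i})

/-- square of the discrete `H¹` norm `‖w_h‖_{1,T}`. -/
def norm1sq (w : ℕ → ℝ) : ℝ :=
  (∑ i ∈ Finset.range (m.I + 1), (w (i + 1) - w i) ^ 2 / m.hp i) + w 0 ^ 2 + w (m.I + 1) ^ 2

/-- square of the discrete `L²` norm `‖w_h‖_0`. -/
def norm0sq (w : ℕ → ℝ) : ℝ := ∑ i ∈ Finset.Icc 1 m.I, m.h i * w i ^ 2

/-- the discrete dual norm `‖w_h‖_{-1,2,T}`. -/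
def normDual (w : ℕ → ℝ) : ℝ :=
  sSup {r : ℝ | ∃ v : ℕ → ℝ, m.norm1sq v ≤ 1 ∧
    r = ∫ x in Set.Ioo (0:ℝ) 1, m.pw w x * m.pw v x}

/-- piecewise constant space derivative: on `(x_i, x_{i+1})` it equals `(w_{i+1} - w_i)/h_{i+1/2}`. -/
def dpw (w : ℕ → ℝ) (x : ℝ) : ℝ :=
  (w (sInf {i : ℕ | x < m.xc (i + 1)} + 1) - w (sInf {i : ℕ | x < m.xc (i + 1)})) /
    m.hp (sInf {i : ℕ | x < m.xc (i + 1)})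

end Mesh

/-- All the data of the corrosion model. -/
structure Data where
  lam : ℝ
  eps : ℝ
  alpha0 : ℝ
  alpha1 : ℝ
  V : ℝ
  rho : ℝ
  dPsi0 : ℝ
  dPsi1 : ℝ
  umax : Sp → ℝ
  m0 : Sp → ℝ
  k0 : Sp → ℝ
  m1 : Sp → ℝ
  k1 : Sp → ℝ
  a0 : Sp → ℝ
  b0 : Sp → ℝ
  a1 : Sp → ℝ
  b1 : Sp → ℝ
  u0 : Sp → ℝ → ℝ
  lam_pos : 0 < lam
  umax_pos : ∀ u, 0 < umax u
  m0_pos : ∀ u, 0 < m0 u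
  k0_pos : ∀ u, 0 < k0 u
  m1_pos : ∀ u, 0 < m1 u
  k1_pos : ∀ u, 0 < k1 u
  a0_mem : ∀ u, a0 u ∈ Set.Icc (0:ℝ) 1
  b0_mem : ∀ u, b0 u ∈ Set.Icc (0:ℝ) 1
  a1_mem : ∀ u, a1 u ∈ Set.Icc (0:ℝ) 1
  b1_mem : ∀ u, b1 u ∈ Set.Icc (0:ℝ) 1
  u0_meas : ∀ u, Measurable (u0 u)

namespace Data
variable (d : Data)

/-- `ε_P = 1`, `ε_N = ε`. -/
def epsu : Sp → ℝ
  | Sp.P => 1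
  | Sp.N => d.eps

def beta0 (u : Sp) (x : ℝ) : ℝ :=
  d.m0 u * Real.exp (-(z u) * d.b0 u * x) + d.k0 u * Real.exp (z u * d.a0 u * x)

def beta1 (u : Sp) (x : ℝ) : ℝ :=
  d.m1 u * Real.exp (-(z u) * d.b1 u * x) + d.k1 u * Real.exp (z u * d.a1 u * x)

def gamma0 (u : Sp) (x : ℝ) : ℝ := d.m0 u * d.umax u * Real.exp (-(z u) * d.b0 u * x)

def gamma1 (u : Sp) (x : ℝ) : ℝ := d.k1 u * d.umax u * Real.exp (z u * d.a1 u * x)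

/-- Hypotheses (H). -/
def HypH : Prop :=
  (3 * d.umax Sp.P - d.umax Sp.N + d.rho = 0) ∧
  (∀ u, ∀ᵐ x ∂(volume.restrict (Set.Ioo (0:ℝ) 1)), 0 ≤ d.u0 u x ∧ d.u0 u x ≤ d.umax u) ∧
  (-(1 / (3 * d.a0 Sp.P)) * (1 + Real.log (d.alpha0 * d.a0 Sp.P * d.k0 Sp.P)) ≤ d.dPsi0 ∧
    d.dPsi0 ≤ (1 / d.a0 Sp.N) * (1 + Real.log (d.alpha0 * d.a0 Sp.N * d.k0 Sp.N))) ∧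
  (-(1 / d.b1 Sp.N) * (1 + Real.log (d.alpha1 * d.b1 Sp.N * d.m1 Sp.N)) ≤ d.dPsi1 ∧
    d.dPsi1 ≤ (1 / (3 * d.b1 Sp.P)) * (1 + Real.log (d.alpha1 * d.b1 Sp.P * d.m1 Sp.P)))

end Data

/-- `dΨ_{i+1/2} = (Ψ_{i+1} - Ψ_i)/h_{i+1/2}`. -/
def dPsiF (m : Mesh) (Psi : ℕ → ℝ) (i : ℕ) : ℝ := (Psi (i + 1) - Psi i) / m.hp i

/-- the Scharfetter-Gummel numerical flux `F_{u,i+1/2}`. -/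
def Flux (m : Mesh) (d : Data) (u : Sp) (Psi w : ℕ → ℝ) (i : ℕ) : ℝ :=
  (Bern (z u * m.hp i * dPsiF m Psi i) * w i -
    Bern (-(z u) * m.hp i * dPsiF m Psi i) * w (i + 1)) / m.hp i

/-- The fully implicit scheme (S), with time step `Δt = T / K`.
`sol u k i` is `u_i^k` (for `u = P, N`) and `Psi k i` is `Ψ_i^k`. -/
def Scheme (m : Mesh) (d : Data) (T : ℝ) (K : ℕ)
    (sol : Sp → ℕ → ℕ → ℝ) (Psi : ℕ → ℕ → ℝ) : Prop :=
  (∀ u i, 1 ≤ i → i ≤ m.I →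
    sol u 0 i = (1 / m.h i) * ∫ x in Set.Ioo (m.xe (i - 1)) (m.xe i), d.u0 u x) ∧
  (∀ k, k < K → ∀ i, 1 ≤ i → i ≤ m.I →
    -(d.lam ^ 2) * (dPsiF m (Psi (k + 1)) i - dPsiF m (Psi (k + 1)) (i - 1)) =
      m.h i * (3 * sol Sp.P (k + 1) i - sol Sp.N (k + 1) i + d.rho)) ∧
  (∀ u k, k < K → ∀ i, 1 ≤ i → i ≤ m.I →
    d.epsu u * m.h i * (sol u (k + 1) i - sol u k i) / (T / K) +
      Flux m d u (Psi (k + 1)) (sol u (k + 1)) i -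
      Flux m d u (Psi (k + 1)) (sol u (k + 1)) (i - 1) = 0) ∧
  (∀ k, k < K → Psi (k + 1) 0 - d.alpha0 * dPsiF m (Psi (k + 1)) 0 = d.dPsi0) ∧
  (∀ k, k < K →
    Psi (k + 1) (m.I + 1) + d.alpha1 * dPsiF m (Psi (k + 1)) m.I = d.V - d.dPsi1) ∧
  (∀ u k, k < K →
    -(Flux m d u (Psi (k + 1)) (sol u (k + 1)) 0) =
      d.beta0 u (Psi (k + 1) 0) * sol u (k + 1) 0 - d.gamma0 u (Psi (k + 1) 0)) ∧
  (∀ u k, k < K →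
    Flux m d u (Psi (k + 1)) (sol u (k + 1)) m.I =
      d.beta1 u (d.V - Psi (k + 1) (m.I + 1)) * sol u (k + 1) (m.I + 1) -
      d.gamma1 u (d.V - Psi (k + 1) (m.I + 1)))

/-- The stability property `0 ≤ u_i^k ≤ u^max` for all `i, k`. -/
def Stable (m : Mesh) (d : Data) (K : ℕ) (sol : Sp → ℕ → ℕ → ℝ) : Prop :=
  ∀ u k, k ≤ K → ∀ i, i ≤ m.I + 1 → 0 ≤ sol u k i ∧ sol u k i ≤ d.umax u

/-- the approximate space-time solution `w_{h,Δt}`, equal to the piecewise constant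
function built on `w^{k+1}` for `t ∈ [t^k, t^{k+1})`, with `Δt = T/K`. -/
def apx (m : Mesh) (T : ℝ) (K : ℕ) (w : ℕ → ℕ → ℝ) (x t : ℝ) : ℝ :=
  m.pw (w (Nat.floor (t / (T / K)) + 1)) x

/-- the discrete space derivative `∂_{x,T} w_{h,Δt}`. -/
def dapx (m : Mesh) (T : ℝ) (K : ℕ) (w : ℕ → ℕ → ℝ) (x t : ℝ) : ℝ :=
  m.dpw (w (Nat.floor (t / (T / K)) + 1)) x


/-- hyperbolic cotangent `coth y = cosh y / sinh y`. -/
def coth (x : ℝ) : ℝ := Real.cosh x / Real.sinh x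

/-- approximate trace at `x = 0`: `t ∈ [t^k, t^{k+1}) ↦ w_0^{k+1}`. -/
def trace0 (T : ℝ) (K : ℕ) (w : ℕ → ℕ → ℝ) (t : ℝ) : ℝ :=
  w (Nat.floor (t / (T / K)) + 1) 0

/-- approximate trace at `x = 1`: `t ∈ [t^k, t^{k+1}) ↦ w_{I+1}^{k+1}`. -/
def trace1 (m : Mesh) (T : ℝ) (K : ℕ) (w : ℕ → ℕ → ℝ) (t : ℝ) : ℝ :=
  w (Nat.floor (t / (T / K)) + 1) (m.I + 1)

/-- the measure on `(0,1) × (0,T)` (space × time). -/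
def stMeasure (T : ℝ) : MeasureTheory.Measure (ℝ × ℝ) :=
  (MeasureTheory.volume.restrict (Set.Ioo (0:ℝ) 1)).prod
    (MeasureTheory.volume.restrict (Set.Ioo (0:ℝ) T))

end Corrosion

/-!
The dual norm of the discrete time derivative is computed by testing the scheme with an
arbitrary `v` of unit discrete `H¹` norm: after summation by parts only the fluxes remain. The
discrete electric field is bounded by a constant `M` (Gauss's law with bounded charge fixes its
oscillation, the Robin conditions its mean), so the Bernoulli weights lie in `[e^{-3M}, e^{3M}]`;
hence an interior Scharfetter–Gummel flux is at most `e^{3M}` times the discrete gradient of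
`u^{k+1}` plus a bounded drift, and the boundary fluxes are bounded since the boundary
potentials are. This gives `ε_u ‖(u^{k+1} - u^k)/Δt‖_{-1} ≤ e^{3M} |u^{k+1}|₁ + c`, and the
claim follows from the discrete `L²(H¹)` bound on `u`. That bound comes from testing with
`u^{k+1}` itself: the lower bound `e^{-3M}` on the Bernoulli weights makes the fluxes coercive,
Young's inequality absorbs the drift, and the `L²` energy telescopes in time.
-/

namespace Corrosion

section DiscreteCalculus

lemma sum_Icc_sub_pred (g : ℕ → ℝ) (n : ℕ) :
    ∑ i ∈ Finset.Icc 1 n, (g i - g (i - 1)) = g n - g 0 := by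
  induction n with
  | zero => simp
  | succ n ih =>
    rw [Finset.sum_Icc_succ_top (by omega), ih, Nat.add_sub_cancel]
    ring

lemma sum_Icc_sub_pred_mul (F v : ℕ → ℝ) (n : ℕ) :
    ∑ i ∈ Finset.Icc 1 n, (F i - F (i - 1)) * v i =
      -(∑ i ∈ Finset.range (n + 1), F i * (v (i + 1) - v i)) - F 0 * v 0 + F n * v (n + 1) := by
  induction n with
  | zero => simp; ring
  | succ n ih =>
    rw [Finset.sum_Icc_succ_top (by omega), ih, Finset.sum_range_succ _ (n + 1), Nat.add_sub_cancel]
    ring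

lemma sum_abs_mul_abs_div_le {ι : Type*} (s : Finset ι) (a b c : ι → ℝ)
    (hc : ∀ i ∈ s, 0 ≤ c i) :
    ∑ i ∈ s, |a i| * |b i| / c i ≤
      √(∑ i ∈ s, a i ^ 2 / c i) * √(∑ i ∈ s, b i ^ 2 / c i) := by
  have hsq (f : ι → ℝ) : ∀ i ∈ s, (|f i| / √(c i)) ^ 2 = f i ^ 2 / c i := fun i hi => by
    rw [div_pow, sq_abs, Real.sq_sqrt (hc i hi)]
  have hmul : ∀ i ∈ s, |a i| / √(c i) * (|b i| / √(c i)) = |a i| * |b i| / c i := fun i hi => by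
    rw [div_mul_div_comm, Real.mul_self_sqrt (hc i hi)]
  have := Real.sum_mul_le_sqrt_mul_sqrt s (fun i => |a i| / √(c i)) (fun i => |b i| / √(c i))
  rwa [Finset.sum_congr rfl hmul, Finset.sum_congr rfl (hsq a), Finset.sum_congr rfl (hsq b)]
    at this

lemma sum_abs_le_sqrt_sum_sq_div {ι : Type*} (s : Finset ι) (a c : ι → ℝ)
    (hc : ∀ i ∈ s, 0 < c i) (hsum : ∑ i ∈ s, c i = 1) :
    ∑ i ∈ s, |a i| ≤ √(∑ i ∈ s, a i ^ 2 / c i) :=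
  calc ∑ i ∈ s, |a i| = ∑ i ∈ s, |a i| * |c i| / c i :=
        Finset.sum_congr rfl fun i hi => by
          rw [abs_of_pos (hc i hi), mul_div_cancel_right₀ _ (hc i hi).ne']
    _ ≤ √(∑ i ∈ s, a i ^ 2 / c i) * √(∑ i ∈ s, c i ^ 2 / c i) :=
        sum_abs_mul_abs_div_le s a c c fun i hi => (hc i hi).le
    _ = √(∑ i ∈ s, a i ^ 2 / c i) := by
        have hc2 : ∑ i ∈ s, c i ^ 2 / c i = ∑ i ∈ s, c i := Finset.sum_congr rfl fun i hi => by
          rw [sq, mul_div_cancel_right₀ _ (hc i hi).ne']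
        rw [hc2, hsum, Real.sqrt_one, mul_one]

lemma mul_sqrt_le_young {b c G : ℝ} (hb : 0 < b) (hG : 0 ≤ G) :
    c * √G ≤ b / 2 * G + c ^ 2 / (2 * b) := by
  have key : b / 2 * G + c ^ 2 / (2 * b) - c * √G = (b * √G - c) ^ 2 / (2 * b) := by
    field_simp
    linear_combination (-b ^ 2) * Real.sq_sqrt hG
  linarith [div_nonneg (sq_nonneg (b * √G - c)) (by positivity : (0:ℝ) ≤ 2 * b)]

lemma abs_sub_zero_le_sum {g c : ℕ → ℝ} {n : ℕ}
    (hg : ∀ i, 1 ≤ i → i ≤ n → |g i - g (i - 1)| ≤ c i) {i : ℕ} (hi : i ≤ n) :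
    |g i - g 0| ≤ ∑ j ∈ Finset.Icc 1 n, c j :=
  calc |g i - g 0| = |∑ j ∈ Finset.Icc 1 i, (g j - g (j - 1))| := by rw [sum_Icc_sub_pred]
    _ ≤ ∑ j ∈ Finset.Icc 1 i, c j :=
        (Finset.abs_sum_le_sum_abs _ _).trans <| Finset.sum_le_sum fun j hj =>
          hg j (Finset.mem_Icc.1 hj).1 ((Finset.mem_Icc.1 hj).2.trans hi)
    _ ≤ ∑ j ∈ Finset.Icc 1 n, c j :=
        Finset.sum_le_sum_of_subset_of_nonneg (Finset.Icc_subset_Icc le_rfl hi) fun j hj _ =>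
          (abs_nonneg _).trans (hg j (Finset.mem_Icc.1 hj).1 (Finset.mem_Icc.1 hj).2)

lemma abs_le_of_robin_eq {g p : ℕ → ℝ} {n : ℕ} {α₀ α₁ S E : ℝ}
    (hp : ∀ i ≤ n, 0 ≤ p i) (hp1 : ∑ i ∈ Finset.range (n + 1), p i = 1)
    (hα₀ : 0 ≤ α₀) (hα₁ : 0 ≤ α₁) (hE : ∀ i ≤ n, |g i - g 0| ≤ E)
    (hS : α₀ * g 0 + ∑ i ∈ Finset.range (n + 1), p i * g i + α₁ * g n = S)
    {i : ℕ} (hi : i ≤ n) :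
    |g i| ≤ |S| + (2 + α₁) * E := by
  have hmean : ∑ i ∈ Finset.range (n + 1), p i * g i =
      g 0 + ∑ i ∈ Finset.range (n + 1), p i * (g i - g 0) := by
    simp only [mul_sub, Finset.sum_sub_distrib, ← Finset.sum_mul, hp1]
    ring
  have hosc : |∑ i ∈ Finset.range (n + 1), p i * (g i - g 0)| ≤ E :=
    calc _ ≤ ∑ i ∈ Finset.range (n + 1), p i * E :=
          (Finset.abs_sum_le_sum_abs _ _).trans <| Finset.sum_le_sum fun j hj => by
            have hj := Finset.mem_range_succ_iff.1 hj
            rw [abs_mul, abs_of_nonneg (hp j hj)]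
            exact mul_le_mul_of_nonneg_left (hE j hj) (hp j hj)
      _ = E := by rw [← Finset.sum_mul, hp1, one_mul]
  have hg0 : |g 0| * (1 + α₀ + α₁) ≤ |S| + E + α₁ * E := by
    have heq : g 0 * (1 + α₀ + α₁) =
        S - ∑ i ∈ Finset.range (n + 1), p i * (g i - g 0) - α₁ * (g n - g 0) := by
      rw [← hS, hmean]; ring
    rw [← abs_of_pos (by linarith : (0:ℝ) < 1 + α₀ + α₁), ← abs_mul, heq]
    have := abs_sub (S - ∑ i ∈ Finset.range (n + 1), p i * (g i - g 0)) (α₁ * (g n - g 0))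
    have := abs_sub S (∑ i ∈ Finset.range (n + 1), p i * (g i - g 0))
    have : |α₁ * (g n - g 0)| ≤ α₁ * E := by
      rw [abs_mul, abs_of_nonneg hα₁]; exact mul_le_mul_of_nonneg_left (hE n le_rfl) hα₁
    linarith
  have := abs_sub_abs_le_abs_sub (g i) (g 0)
  nlinarith [hE i hi, abs_nonneg (g 0)]

lemma sum_le_of_forall_step_le {K : ℕ} {Q D : ℕ → ℝ} {a c : ℝ}
    (h : ∀ k < K, a * (Q (k + 1) - Q k) + D k ≤ c) (hQ : 0 ≤ a * Q K) :
    ∑ k ∈ Finset.range K, D k ≤ K * c + a * Q 0 := by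
  have hsum := Finset.sum_le_sum fun k hk => h k (Finset.mem_range.1 hk)
  rw [Finset.sum_add_distrib, ← Finset.mul_sum, Finset.sum_range_sub, Finset.sum_const,
    Finset.card_range, nsmul_eq_mul] at hsum
  linarith

end DiscreteCalculus

section Bernoulli

lemma Bern_neg (x : ℝ) : Bern (-x) = Bern x + x := by
  rcases eq_or_ne x 0 with rfl | hx
  · simp [Bern]
  have h1 : Real.exp x - 1 ≠ 0 := sub_ne_zero.2 fun h => hx (Real.exp_eq_one_iff x |>.1 h)
  simp only [Bern, if_neg hx, if_neg (neg_ne_zero.2 hx), Real.exp_neg]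
  have h3 : 1 - Real.exp x ≠ 0 := fun h => h1 (by linarith)
  field_simp
  ring

lemma Bern_le_one {x : ℝ} (hx : 0 ≤ x) : Bern x ≤ 1 := by
  rcases hx.eq_or_lt with rfl | hx
  · simp [Bern]
  have := Real.add_one_le_exp x
  rw [Bern, if_neg hx.ne', div_le_one (by linarith [Real.add_one_lt_exp hx.ne'])]
  linarith

lemma exp_neg_le_Bern {x : ℝ} (hx : 0 ≤ x) : Real.exp (-x) ≤ Bern x := by
  rcases hx.eq_or_lt with rfl | hx
  · simp [Bern]
  have hpos : 0 < Real.exp x - 1 := by linarith [Real.add_one_lt_exp hx.ne']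
  -- `1 - x ≤ e^{-x}` is `e^x - 1 ≤ x e^x`
  have key : Real.exp x - 1 ≤ x * Real.exp x := by
    have := Real.add_one_le_exp (-x)
    have h := Real.exp_neg x ▸ mul_le_mul_of_nonneg_right this (Real.exp_pos x).le
    rw [inv_mul_cancel₀ (Real.exp_ne_zero x)] at h
    linarith
  rw [Bern, if_neg hx.ne', Real.exp_neg, inv_le_iff_one_le_mul₀ (Real.exp_pos x),
    div_mul_eq_mul_div, one_le_div hpos]
  linarith

lemma exp_neg_abs_le_Bern (x : ℝ) : Real.exp (-|x|) ≤ Bern x := by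
  rcases le_or_gt 0 x with hx | hx
  · rw [abs_of_nonneg hx]
    exact exp_neg_le_Bern hx
  · have := exp_neg_le_Bern (neg_nonneg.2 hx.le)
    rw [neg_neg, Bern_neg] at this
    rw [abs_of_neg hx, neg_neg]
    linarith

lemma Bern_le_exp_abs (x : ℝ) : Bern x ≤ Real.exp |x| := by
  rcases le_or_gt 0 x with hx | hx
  · exact (Bern_le_one hx).trans (Real.one_le_exp (abs_nonneg x))
  · have := Bern_le_one (neg_nonneg.2 hx.le)
    rw [Bern_neg] at this
    rw [abs_of_neg hx]
    linarith [Real.add_one_le_exp (-x)]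

end Bernoulli

namespace Mesh

variable (m : Mesh)

lemma xe_strictMonoOn : StrictMonoOn m.xe (Set.Iic m.I) :=
  strictMonoOn_Iic_of_lt_succ fun j hj => by simpa using m.mono j hj

lemma xe_le_xe {i j : ℕ} (hij : i ≤ j) (hj : j ≤ m.I) : m.xe i ≤ m.xe j :=
  m.xe_strictMonoOn.monotoneOn (Set.mem_Iic.2 (hij.trans hj)) (Set.mem_Iic.2 hj) hij

lemma xe_nonneg {i : ℕ} (hi : i ≤ m.I) : 0 ≤ m.xe i :=
  m.xe0 ▸ m.xe_le_xe (Nat.zero_le i) hi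

lemma xe_le_one {i : ℕ} (hi : i ≤ m.I) : m.xe i ≤ 1 :=
  m.xeI ▸ m.xe_le_xe hi le_rfl

lemma h_pos {i : ℕ} (h1 : 1 ≤ i) (hi : i ≤ m.I) : 0 < m.h i := by
  have := m.mono (i - 1) (by omega)
  rw [Nat.sub_add_cancel h1] at this
  exact sub_pos.2 this

lemma sum_h : ∑ i ∈ Finset.Icc 1 m.I, m.h i = 1 := by
  have := sum_Icc_sub_pred m.xe m.I
  rwa [m.xeI, m.xe0, sub_zero] at this

lemma xc_zero : m.xc 0 = 0 := rfl

lemma xc_last : m.xc (m.I + 1) = 1 := by simp [xc]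

lemma xc_of_mem {i : ℕ} (h1 : 1 ≤ i) (hi : i ≤ m.I) : m.xc i = (m.xe (i - 1) + m.xe i) / 2 := by
  simp [xc, show i ≠ 0 by omega, show i ≠ m.I + 1 by omega]

lemma xc_lt_xc_succ {i : ℕ} (hi : i ≤ m.I) : m.xc i < m.xc (i + 1) := by
  rcases Nat.eq_zero_or_pos i with rfl | h0
  · have := m.mono 0 m.hI
    rw [m.xe0, zero_add] at this
    rw [xc_zero, m.xc_of_mem le_rfl m.hI, Nat.sub_self, m.xe0]
    linarith
  have hprev := m.mono (i - 1) (by omega)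
  rw [Nat.sub_add_cancel h0] at hprev
  rw [m.xc_of_mem h0 hi]
  rcases hi.lt_or_eq with hI | rfl
  · have := m.mono i hI
    rw [m.xc_of_mem (i := i + 1) (by omega) hI, Nat.add_sub_cancel]
    linarith
  · rw [xc_last, ← m.xeI]
    linarith

lemma hp_pos {i : ℕ} (hi : i ≤ m.I) : 0 < m.hp i := sub_pos.2 (m.xc_lt_xc_succ hi)

lemma hp_pos_of_mem_range {i : ℕ} (hi : i ∈ Finset.range (m.I + 1)) : 0 < m.hp i :=
  m.hp_pos (Finset.mem_range_succ_iff.1 hi)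

lemma sum_hp : ∑ i ∈ Finset.range (m.I + 1), m.hp i = 1 := by
  have := Finset.sum_range_sub m.xc (m.I + 1)
  rwa [m.xc_last, m.xc_zero, sub_zero] at this

lemma hp_le_one {i : ℕ} (hi : i ≤ m.I) : m.hp i ≤ 1 :=
  m.sum_hp ▸ Finset.single_le_sum (fun _ hj => (m.hp_pos_of_mem_range hj).le)
    (Finset.mem_range.2 (Nat.lt_succ_of_le hi))

lemma pw_eq_of_mem_Ioo (w : ℕ → ℝ) {i : ℕ} (h1 : 1 ≤ i) (hi : i ≤ m.I) {x : ℝ}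
    (hx : x ∈ Set.Ioo (m.xe (i - 1)) (m.xe i)) : m.pw w x = w i := by
  have hx0 : x ≠ 0 := (lt_of_le_of_lt (m.xe_nonneg (by omega)) hx.1).ne'
  have hx1 : x ≠ 1 := (lt_of_lt_of_le hx.2 (m.xe_le_one hi)).ne
  have hinf : sInf {j : ℕ | x < m.xe j} = i := by
    refine le_antisymm (Nat.sInf_le hx.2) (le_csInf ⟨i, hx.2⟩ fun j hj => ?_)
    by_contra! hji
    exact absurd hj (not_lt.2 ((m.xe_le_xe (by omega) (by omega)).trans hx.1.le))
  simp only [pw, if_neg hx0, if_neg hx1, hinf]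

lemma integral_pw_mul (w v : ℕ → ℝ) :
    ∫ x in Set.Ioo (0:ℝ) 1, m.pw w x * m.pw v x = ∑ i ∈ Finset.Icc 1 m.I, m.h i * (w i * v i) := by
  have hcell : ∀ k < m.I, Set.EqOn (fun x => m.pw w x * m.pw v x)
      (fun _ => w (k + 1) * v (k + 1)) (Set.Ioo (m.xe k) (m.xe (k + 1))) := fun k hk x hx => by
    simp only [m.pw_eq_of_mem_Ioo _ (Nat.le_add_left 1 k) hk hx]
  have hint : ∀ k < m.I, IntervalIntegrable (fun x => m.pw w x * m.pw v x) MeasureTheory.volume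
      (m.xe k) (m.xe (k + 1)) := fun k hk =>
    (intervalIntegrable_iff_integrableOn_Ioo_of_le (m.mono k hk).le).2 <|
      (MeasureTheory.integrableOn_congr_fun (hcell k hk) measurableSet_Ioo).2 <|
        MeasureTheory.integrableOn_const (by simp)
  rw [← MeasureTheory.integral_Ioc_eq_integral_Ioo, ← intervalIntegral.integral_of_le zero_le_one,
    ← m.xe0, ← m.xeI, ← intervalIntegral.sum_integral_adjacent_intervals hint, Finset.range_eq_Ico,
    ← Finset.Ico_add_one_right_eq_Icc, ← zero_add 1, ← Finset.sum_Ico_add']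
  refine Finset.sum_congr rfl fun k hk => ?_
  have hk : k < m.I := (Finset.mem_Ico.1 hk).2
  rw [intervalIntegral.integral_of_le (m.mono k hk).le, MeasureTheory.integral_Ioc_eq_integral_Ioo,
    MeasureTheory.setIntegral_congr_fun measurableSet_Ioo (hcell k hk),
    MeasureTheory.setIntegral_const, Real.volume_real_Ioo_of_le (m.mono k hk).le, smul_eq_mul]
  rfl

def gradSq (w : ℕ → ℝ) : ℝ := ∑ i ∈ Finset.range (m.I + 1), (w (i + 1) - w i) ^ 2 / m.hp i

lemma norm1sq_eq (w : ℕ → ℝ) : m.norm1sq w = m.gradSq w + w 0 ^ 2 + w (m.I + 1) ^ 2 := rfl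

lemma gradSq_nonneg (w : ℕ → ℝ) : 0 ≤ m.gradSq w :=
  Finset.sum_nonneg fun _ hi => div_nonneg (sq_nonneg _) (m.hp_pos_of_mem_range hi).le

lemma sum_abs_sub_le_sqrt_gradSq (w : ℕ → ℝ) :
    ∑ i ∈ Finset.range (m.I + 1), |w (i + 1) - w i| ≤ √(m.gradSq w) :=
  sum_abs_le_sqrt_sum_sq_div _ _ _ (fun _ hi => m.hp_pos_of_mem_range hi) m.sum_hp

lemma sum_abs_sub_mul_abs_sub_div_le (w v : ℕ → ℝ) :
    ∑ i ∈ Finset.range (m.I + 1), |w (i + 1) - w i| * |v (i + 1) - v i| / m.hp i ≤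
      √(m.gradSq w) * √(m.gradSq v) :=
  sum_abs_mul_abs_div_le _ _ _ _ fun _ hi => (m.hp_pos_of_mem_range hi).le

lemma normDual_nonneg (w : ℕ → ℝ) : 0 ≤ m.normDual w :=
  Real.sSup_nonneg' ⟨0, ⟨0, by simp [norm1sq_eq, gradSq], by simp [integral_pw_mul]⟩, le_rfl⟩

lemma normDual_le {w : ℕ → ℝ} {G : ℝ}
    (h : ∀ v, m.norm1sq v ≤ 1 → ∑ i ∈ Finset.Icc 1 m.I, m.h i * (w i * v i) ≤ G) :
    m.normDual w ≤ G :=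
  csSup_le ⟨_, 0, by simp [norm1sq_eq, gradSq], rfl⟩ <| by
    rintro r ⟨v, hv, rfl⟩
    rw [integral_pw_mul]
    exact h v hv

lemma norm0sq_nonneg (w : ℕ → ℝ) : 0 ≤ m.norm0sq w :=
  Finset.sum_nonneg fun _ hi =>
    mul_nonneg (m.h_pos (Finset.mem_Icc.1 hi).1 (Finset.mem_Icc.1 hi).2).le (sq_nonneg _)

lemma norm0sq_le {w : ℕ → ℝ} {U : ℝ} (hw : ∀ i, 1 ≤ i → i ≤ m.I → |w i| ≤ U) :
    m.norm0sq w ≤ U ^ 2 :=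
  calc m.norm0sq w ≤ ∑ i ∈ Finset.Icc 1 m.I, m.h i * U ^ 2 :=
        Finset.sum_le_sum fun i hi => by
          obtain ⟨h1, hi⟩ := Finset.mem_Icc.1 hi
          exact mul_le_mul_of_nonneg_left (sq_le_sq' (abs_le.1 (hw i h1 hi)).1
            (abs_le.1 (hw i h1 hi)).2) (m.h_pos h1 hi).le
    _ = U ^ 2 := by rw [← Finset.sum_mul, m.sum_h, one_mul]

lemma norm0sq_sub_le (a b : ℕ → ℝ) :
    m.norm0sq a - m.norm0sq b ≤ 2 * ∑ i ∈ Finset.Icc 1 m.I, m.h i * ((a i - b i) * a i) := by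
  rw [norm0sq, norm0sq, ← Finset.sum_sub_distrib, Finset.mul_sum]
  refine Finset.sum_le_sum fun i hi => ?_
  have := mul_nonneg (m.h_pos (Finset.mem_Icc.1 hi).1 (Finset.mem_Icc.1 hi).2).le
    (sq_nonneg (a i - b i))
  linarith

/-- The discrete counterpart of `∫ F ∂ₓv`, equal to `-∑ (F_{i+1/2} - F_{i-1/2}) v_i` by
`sum_Icc_flux_sub_mul`. -/
def fluxPairing (F v : ℕ → ℝ) : ℝ :=
  ∑ i ∈ Finset.range (m.I + 1), F i * (v (i + 1) - v i) + F 0 * v 0 - F m.I * v (m.I + 1)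

lemma sum_Icc_flux_sub_mul (F v : ℕ → ℝ) :
    ∑ i ∈ Finset.Icc 1 m.I, (F i - F (i - 1)) * v i = -m.fluxPairing F v := by
  rw [sum_Icc_sub_pred_mul, fluxPairing]
  ring

variable {m}

lemma norm1sq_le_one {v : ℕ → ℝ} (hv : m.norm1sq v ≤ 1) :
    m.gradSq v ≤ 1 ∧ |v 0| ≤ 1 ∧ |v (m.I + 1)| ≤ 1 := by
  rw [norm1sq_eq] at hv
  have := m.gradSq_nonneg v
  have := sq_nonneg (v 0)
  have := sq_nonneg (v (m.I + 1))
  refine ⟨by linarith, ?_, ?_⟩ <;> exact (sq_le_one_iff_abs_le_one _).1 (by linarith)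

lemma fluxPairing_le {F s v : ℕ → ℝ} {A B Cb : ℝ} (hA : 0 ≤ A) (hB : 0 ≤ B)
    (hF : ∀ i ≤ m.I, |F i| ≤ A * |s (i + 1) - s i| / m.hp i + B)
    (h0 : |F 0| ≤ Cb) (hI : |F m.I| ≤ Cb) (hv : m.norm1sq v ≤ 1) :
    m.fluxPairing F v ≤ A * √(m.gradSq s) + B + 2 * Cb := by
  obtain ⟨hvg, hv0, hvI⟩ := norm1sq_le_one hv
  have hsqrt : √(m.gradSq v) ≤ 1 := Real.sqrt_le_one.2 hvg
  have hinterior : ∑ i ∈ Finset.range (m.I + 1), F i * (v (i + 1) - v i) ≤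
      A * √(m.gradSq s) + B :=
    calc ∑ i ∈ Finset.range (m.I + 1), F i * (v (i + 1) - v i)
        ≤ ∑ i ∈ Finset.range (m.I + 1),
            (A * (|s (i + 1) - s i| * |v (i + 1) - v i| / m.hp i) + B * |v (i + 1) - v i|) :=
          Finset.sum_le_sum fun i hi => by
            have := mul_le_mul_of_nonneg_right
              (hF i (Finset.mem_range_succ_iff.1 hi)) (abs_nonneg (v (i + 1) - v i))
            rw [← abs_mul] at this
            refine (le_abs_self _).trans (this.trans_eq ?_)
            ring
      _ ≤ A * (√(m.gradSq s) * √(m.gradSq v)) + B * √(m.gradSq v) := by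
          rw [Finset.sum_add_distrib, ← Finset.mul_sum, ← Finset.mul_sum]
          gcongr
          · exact m.sum_abs_sub_mul_abs_sub_div_le s v
          · exact m.sum_abs_sub_le_sqrt_gradSq v
      _ ≤ A * √(m.gradSq s) + B := by
          gcongr
          · exact mul_le_of_le_one_right (Real.sqrt_nonneg _) hsqrt
          · exact mul_le_of_le_one_right hB hsqrt
  have hb0 : F 0 * v 0 ≤ Cb := (le_abs_self _).trans <| by
    rw [abs_mul, ← mul_one Cb]
    exact mul_le_mul h0 hv0 (abs_nonneg _) ((abs_nonneg _).trans h0)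
  have hbI : -(F m.I * v (m.I + 1)) ≤ Cb := (neg_le_abs _).trans <| by
    rw [abs_mul, ← mul_one Cb]
    exact mul_le_mul hI hvI (abs_nonneg _) ((abs_nonneg _).trans hI)
  rw [fluxPairing]
  linarith

/-- The coercive part of the interior fluxes absorbs the drift part by Young's inequality. -/
lemma fluxPairing_self_le {F s : ℕ → ℝ} {b B Cb U : ℝ} (hb : 0 < b) (hB : 0 ≤ B)
    (hF : ∀ i ≤ m.I, F i * (s (i + 1) - s i) ≤
      -(b * (s (i + 1) - s i) ^ 2 / m.hp i) + B * |s (i + 1) - s i|)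
    (h0 : |F 0| ≤ Cb) (hI : |F m.I| ≤ Cb) (hs0 : |s 0| ≤ U) (hsI : |s (m.I + 1)| ≤ U) :
    m.fluxPairing F s ≤ -(b / 2 * m.gradSq s) + (B ^ 2 / (2 * b) + 2 * Cb * U) := by
  have hinterior : ∑ i ∈ Finset.range (m.I + 1), F i * (s (i + 1) - s i) ≤
      -(b * m.gradSq s) + B * √(m.gradSq s) :=
    calc ∑ i ∈ Finset.range (m.I + 1), F i * (s (i + 1) - s i)
        ≤ ∑ i ∈ Finset.range (m.I + 1),
            (-(b * (s (i + 1) - s i) ^ 2 / m.hp i) + B * |s (i + 1) - s i|) :=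
          Finset.sum_le_sum fun i hi => hF i (Finset.mem_range_succ_iff.1 hi)
      _ = -(b * m.gradSq s) + B * ∑ i ∈ Finset.range (m.I + 1), |s (i + 1) - s i| := by
          simp only [Finset.sum_add_distrib, Finset.sum_neg_distrib, ← Finset.mul_sum, gradSq,
            mul_div_assoc]
      _ ≤ -(b * m.gradSq s) + B * √(m.gradSq s) := by
          gcongr
          exact m.sum_abs_sub_le_sqrt_gradSq s
  have hyoung := mul_sqrt_le_young (c := B) hb (m.gradSq_nonneg s)
  have hb0 : F 0 * s 0 ≤ Cb * U := (le_abs_self _).trans <| by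
    rw [abs_mul]
    exact mul_le_mul h0 hs0 (abs_nonneg _) ((abs_nonneg _).trans h0)
  have hbI : -(F m.I * s (m.I + 1)) ≤ Cb * U := (neg_le_abs _).trans <| by
    rw [abs_mul]
    exact mul_le_mul hI hsI (abs_nonneg _) ((abs_nonneg _).trans hI)
  rw [fluxPairing]
  linarith

end Mesh

lemma abs_z_le (u : Sp) : |z u| ≤ 3 := by
  cases u <;> norm_num [z]

lemma exp_mul_mul_le {c a : ℝ} (hc : |c| ≤ 3) (ha : a ∈ Set.Icc (0:ℝ) 1) (x : ℝ) :
    Real.exp (c * a * x) ≤ Real.exp (3 * |x|) := by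
  refine Real.exp_le_exp.2 ((le_abs_self _).trans ?_)
  rw [abs_mul, abs_mul, abs_of_nonneg ha.1]
  gcongr
  exact (mul_le_of_le_one_right (abs_nonneg c) ha.2).trans hc

section Flux

variable (m : Mesh) (d : Data) (u : Sp) (P w : ℕ → ℝ)

/-- Splitting into diffusion and drift rests on `B(-x) = B(x) + x`. -/
lemma Flux_eq {i : ℕ} (hi : i ≤ m.I) :
    Flux m d u P w i =
      Bern (z u * m.hp i * dPsiF m P i) * (w i - w (i + 1)) / m.hp i -
        z u * dPsiF m P i * w (i + 1) := by
  have hne := (m.hp_pos hi).ne'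
  rw [Flux, show -z u * m.hp i * dPsiF m P i = -(z u * m.hp i * dPsiF m P i) by ring, Bern_neg]
  field_simp
  ring

variable {m P w} {M U : ℝ} {i : ℕ}

lemma abs_z_mul_dPsiF_le (hg : |dPsiF m P i| ≤ M) : |z u * dPsiF m P i| ≤ 3 * M := by
  rw [abs_mul]
  exact mul_le_mul (abs_z_le u) hg (abs_nonneg _) (by norm_num)

lemma abs_z_mul_hp_mul_dPsiF_le (hi : i ≤ m.I) (hg : |dPsiF m P i| ≤ M) :
    |z u * m.hp i * dPsiF m P i| ≤ 3 * M := by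
  rw [mul_right_comm, abs_mul, abs_of_pos (m.hp_pos hi)]
  exact (mul_le_of_le_one_right (abs_nonneg _) (m.hp_le_one hi)).trans (abs_z_mul_dPsiF_le u hg)

lemma abs_drift_le (hg : |dPsiF m P i| ≤ M) (hw : 0 ≤ w (i + 1)) (hwU : w (i + 1) ≤ U) :
    |z u * dPsiF m P i * w (i + 1)| ≤ 3 * M * U := by
  rw [abs_mul, abs_of_nonneg hw]
  exact mul_le_mul (abs_z_mul_dPsiF_le u hg) hwU hw ((abs_nonneg _).trans (abs_z_mul_dPsiF_le u hg))

lemma abs_Flux_le (hi : i ≤ m.I) (hg : |dPsiF m P i| ≤ M) (hw : 0 ≤ w (i + 1))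
    (hwU : w (i + 1) ≤ U) :
    |Flux m d u P w i| ≤ Real.exp (3 * M) * |w (i + 1) - w i| / m.hp i + 3 * M * U := by
  have hB := (Bern_le_exp_abs _).trans
    (Real.exp_le_exp.2 (abs_z_mul_hp_mul_dPsiF_le u hi hg))
  have hBpos := (Real.exp_pos _).trans_le (exp_neg_abs_le_Bern (z u * m.hp i * dPsiF m P i))
  rw [Flux_eq m d u P w hi]
  refine (abs_sub _ _).trans (add_le_add ?_ (abs_drift_le u hg hw hwU))
  have := m.hp_pos hi
  rw [abs_div, abs_mul, abs_of_pos hBpos, abs_of_pos this, abs_sub_comm]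
  gcongr

lemma Flux_mul_sub_le (hi : i ≤ m.I) (hg : |dPsiF m P i| ≤ M) (hw : 0 ≤ w (i + 1))
    (hwU : w (i + 1) ≤ U) :
    Flux m d u P w i * (w (i + 1) - w i) ≤
      -(Real.exp (-(3 * M)) * (w (i + 1) - w i) ^ 2 / m.hp i) + 3 * M * U * |w (i + 1) - w i| := by
  have hB := (Real.exp_le_exp.2 (neg_le_neg (abs_z_mul_hp_mul_dPsiF_le u hi hg))).trans
    (exp_neg_abs_le_Bern (z u * m.hp i * dPsiF m P i))
  have hdrift := (neg_le_abs _).trans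
    ((abs_mul (z u * dPsiF m P i * w (i + 1)) (w (i + 1) - w i)).trans_le
      (mul_le_mul_of_nonneg_right (abs_drift_le u hg hw hwU) (abs_nonneg _)))
  have hdiff : Bern (z u * m.hp i * dPsiF m P i) * (w i - w (i + 1)) / m.hp i * (w (i + 1) - w i) =
      -(Bern (z u * m.hp i * dPsiF m P i) * (w (i + 1) - w i) ^ 2 / m.hp i) := by
    ring
  have hcoer : Real.exp (-(3 * M)) * (w (i + 1) - w i) ^ 2 / m.hp i ≤
      Bern (z u * m.hp i * dPsiF m P i) * (w (i + 1) - w i) ^ 2 / m.hp i := by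
    have := m.hp_pos hi
    gcongr
  rw [Flux_eq m d u P w hi, sub_mul, hdiff]
  linarith

end Flux

namespace Data

variable (d : Data)

def chargeBound : ℝ := 3 * d.umax Sp.P + d.umax Sp.N + |d.rho|

def gradPsiBound : ℝ :=
  |d.V| + |d.dPsi0| + |d.dPsi1| + (2 + d.alpha1) * (d.chargeBound / d.lam ^ 2)

/-- Built from `|Ψ₀| ≤ |ΔΨ₀^pzc| + α₀ M` and `|V - Ψ_{I+1}| ≤ |ΔΨ₁^pzc| + α₁ M`,
`M = gradPsiBound`. -/
def boundaryFluxBound (u : Sp) : ℝ :=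
  ((2 * d.m0 u + d.k0 u) * Real.exp (3 * (|d.dPsi0| + d.alpha0 * d.gradPsiBound)) +
    (d.m1 u + 2 * d.k1 u) * Real.exp (3 * (|d.dPsi1| + d.alpha1 * d.gradPsiBound))) * d.umax u

def energyRate (u : Sp) : ℝ :=
  (3 * d.gradPsiBound * d.umax u) ^ 2 / (2 * Real.exp (-(3 * d.gradPsiBound))) +
    2 * d.boundaryFluxBound u * d.umax u

def energyBound (T : ℝ) (u : Sp) : ℝ :=
  (d.epsu u * d.umax u ^ 2 + 2 * T * d.energyRate u) / Real.exp (-(3 * d.gradPsiBound))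

def dualBound (T : ℝ) (u : Sp) : ℝ :=
  (2 * Real.exp (3 * d.gradPsiBound) ^ 2 * d.energyBound T u +
      2 * (3 * d.gradPsiBound * d.umax u + 2 * d.boundaryFluxBound u) ^ 2 * T) / d.epsu u ^ 2

lemma chargeBound_nonneg : 0 ≤ d.chargeBound := by
  have := d.umax_pos Sp.P; have := d.umax_pos Sp.N
  unfold chargeBound; positivity

lemma gradPsiBound_nonneg (ha1 : 0 ≤ d.alpha1) : 0 ≤ d.gradPsiBound := by
  have := d.chargeBound_nonneg
  unfold gradPsiBound; positivity

lemma boundaryFluxBound_pos (u : Sp) : 0 < d.boundaryFluxBound u := by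
  have := d.m0_pos u; have := d.k0_pos u; have := d.m1_pos u; have := d.k1_pos u
  have := d.umax_pos u
  unfold boundaryFluxBound; positivity

lemma epsu_pos (heps : 0 < d.eps) (u : Sp) : 0 < d.epsu u := by
  cases u
  · exact one_pos
  · exact heps

lemma dualBound_pos (heps : 0 < d.eps) (ha1 : 0 ≤ d.alpha1) {T : ℝ} (hT : 0 < T) (u : Sp) :
    0 < d.dualBound T u := by
  have := d.gradPsiBound_nonneg ha1
  have := d.boundaryFluxBound_pos u
  have := d.umax_pos u
  have := d.epsu_pos heps u
  have : 0 ≤ d.energyBound T u := by unfold energyBound energyRate; positivity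
  unfold dualBound; positivity

lemma abs_gamma0_sub_beta0_mul_le (u : Sp) (x : ℝ) {s : ℝ} (hs : 0 ≤ s) (hsU : s ≤ d.umax u) :
    |d.gamma0 u x - d.beta0 u x * s| ≤ (2 * d.m0 u + d.k0 u) * Real.exp (3 * |x|) * d.umax u := by
  have e1 := exp_mul_mul_le (c := -z u) (by rw [abs_neg]; exact abs_z_le u) (d.b0_mem u) x
  have e2 := exp_mul_mul_le (abs_z_le u) (d.a0_mem u) x
  have := d.m0_pos u; have := d.k0_pos u; have := d.umax_pos u
  have hβ : 0 ≤ d.beta0 u x := by unfold Data.beta0; positivity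
  have hγ : 0 ≤ d.gamma0 u x := by unfold Data.gamma0; positivity
  have hβs : d.beta0 u x * s ≤ (d.m0 u + d.k0 u) * Real.exp (3 * |x|) * d.umax u := by
    refine mul_le_mul ?_ hsU hs (by positivity)
    unfold Data.beta0
    nlinarith
  have hγle : d.gamma0 u x ≤ d.m0 u * d.umax u * Real.exp (3 * |x|) := by
    unfold Data.gamma0
    gcongr
  rw [abs_le]
  constructor <;> nlinarith [mul_nonneg hβ hs]

lemma abs_beta1_mul_sub_gamma1_le (u : Sp) (x : ℝ) {s : ℝ} (hs : 0 ≤ s) (hsU : s ≤ d.umax u) :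
    |d.beta1 u x * s - d.gamma1 u x| ≤ (d.m1 u + 2 * d.k1 u) * Real.exp (3 * |x|) * d.umax u := by
  have e1 := exp_mul_mul_le (c := -z u) (by rw [abs_neg]; exact abs_z_le u) (d.b1_mem u) x
  have e2 := exp_mul_mul_le (abs_z_le u) (d.a1_mem u) x
  have := d.m1_pos u; have := d.k1_pos u; have := d.umax_pos u
  have hβ : 0 ≤ d.beta1 u x := by unfold Data.beta1; positivity
  have hγ : 0 ≤ d.gamma1 u x := by unfold Data.gamma1; positivity
  have hβs : d.beta1 u x * s ≤ (d.m1 u + d.k1 u) * Real.exp (3 * |x|) * d.umax u := by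
    refine mul_le_mul ?_ hsU hs (by positivity)
    unfold Data.beta1
    nlinarith
  have hγle : d.gamma1 u x ≤ d.k1 u * d.umax u * Real.exp (3 * |x|) := by
    unfold Data.gamma1
    gcongr
  rw [abs_le]
  constructor <;> nlinarith [mul_nonneg hβ hs]

end Data

variable {m : Mesh} {d : Data} {T : ℝ} {K : ℕ} {sol : Sp → ℕ → ℕ → ℝ} {Psi : ℕ → ℕ → ℝ} {k : ℕ}

lemma Stable.abs_charge_le (hSt : Stable m d K sol) (hk : k ≤ K) {i : ℕ}
    (hi : i ≤ m.I + 1) : |3 * sol Sp.P k i - sol Sp.N k i + d.rho| ≤ d.chargeBound := by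
  obtain ⟨hP0, hPU⟩ := hSt Sp.P k hk i hi
  obtain ⟨hN0, hNU⟩ := hSt Sp.N k hk i hi
  rw [Data.chargeBound, abs_le]
  constructor <;> linarith [neg_abs_le d.rho, le_abs_self d.rho]

namespace Scheme

/-- Gauss's law gives the oscillation of the discrete field, and the Robin boundary conditions
fix its mean. -/
lemma abs_dPsiF_le (hS : Scheme m d T K sol Psi) (hSt : Stable m d K sol)
    (ha0 : 0 ≤ d.alpha0) (ha1 : 0 ≤ d.alpha1) (hk : k < K) {i : ℕ} (hi : i ≤ m.I) :
    |dPsiF m (Psi (k + 1)) i| ≤ d.gradPsiBound := by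
  obtain ⟨-, hPoisson, -, hbc0, hbc1, -, -⟩ := hS
  set g := dPsiF m (Psi (k + 1))
  have hlam : 0 < d.lam ^ 2 := pow_pos d.lam_pos 2
  have hjump : ∀ j, 1 ≤ j → j ≤ m.I → |g j - g (j - 1)| ≤ m.h j * (d.chargeBound / d.lam ^ 2) := by
    intro j h1 hj
    have heq : g j - g (j - 1) =
        -(m.h j * (3 * sol Sp.P (k + 1) j - sol Sp.N (k + 1) j + d.rho)) / d.lam ^ 2 := by
      rw [eq_div_iff hlam.ne', ← hPoisson k hk j h1 hj]
      ring
    rw [heq, abs_div, abs_neg, abs_mul, abs_of_pos (m.h_pos h1 hj), abs_of_pos hlam, mul_div_assoc]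
    gcongr
    · exact (m.h_pos h1 hj).le
    · exact hSt.abs_charge_le hk (by omega)
  have hosc : ∀ j ≤ m.I, |g j - g 0| ≤ d.chargeBound / d.lam ^ 2 := fun j hj =>
    (abs_sub_zero_le_sum hjump hj).trans_eq (by rw [← Finset.sum_mul, m.sum_h, one_mul])
  have htel : ∑ j ∈ Finset.range (m.I + 1), m.hp j * g j =
      Psi (k + 1) (m.I + 1) - Psi (k + 1) 0 := by
    rw [← Finset.sum_range_sub (Psi (k + 1))]
    exact Finset.sum_congr rfl fun j hj => mul_div_cancel₀ _ (m.hp_pos_of_mem_range hj).ne'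
  have hrobin : d.alpha0 * g 0 + ∑ j ∈ Finset.range (m.I + 1), m.hp j * g j + d.alpha1 * g m.I =
      d.V - d.dPsi1 - d.dPsi0 := by
    have := hbc0 k hk; have := hbc1 k hk
    rw [htel]
    linarith
  have hS' : |d.V - d.dPsi1 - d.dPsi0| ≤ |d.V| + |d.dPsi0| + |d.dPsi1| := by
    have := abs_sub (d.V - d.dPsi1) d.dPsi0
    have := abs_sub d.V d.dPsi1
    linarith
  have := abs_le_of_robin_eq (fun j hj => (m.hp_pos hj).le) m.sum_hp ha0 ha1 hosc hrobin hi
  rw [Data.gradPsiBound]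
  linarith

lemma abs_Psi_zero_le (hS : Scheme m d T K sol Psi) (hSt : Stable m d K sol)
    (ha0 : 0 ≤ d.alpha0) (ha1 : 0 ≤ d.alpha1) (hk : k < K) :
    |Psi (k + 1) 0| ≤ |d.dPsi0| + d.alpha0 * d.gradPsiBound := by
  have hg := hS.abs_dPsiF_le hSt ha0 ha1 hk (Nat.zero_le _)
  have ⟨_, _, _, hrobin0, _, _, _⟩ := hS
  rw [show Psi (k + 1) 0 = d.dPsi0 + d.alpha0 * dPsiF m (Psi (k + 1)) 0 by
    linarith [hrobin0 k hk]]
  refine (abs_add_le _ _).trans (add_le_add le_rfl ?_)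
  rw [abs_mul, abs_of_nonneg ha0]
  exact mul_le_mul_of_nonneg_left hg ha0

lemma abs_V_sub_Psi_last_le (hS : Scheme m d T K sol Psi) (hSt : Stable m d K sol)
    (ha0 : 0 ≤ d.alpha0) (ha1 : 0 ≤ d.alpha1) (hk : k < K) :
    |d.V - Psi (k + 1) (m.I + 1)| ≤ |d.dPsi1| + d.alpha1 * d.gradPsiBound := by
  have hg := hS.abs_dPsiF_le hSt ha0 ha1 hk le_rfl
  have ⟨_, _, _, _, hrobin1, _, _⟩ := hS
  rw [show d.V - Psi (k + 1) (m.I + 1) = d.dPsi1 + d.alpha1 * dPsiF m (Psi (k + 1)) m.I by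
    linarith [hrobin1 k hk]]
  refine (abs_add_le _ _).trans (add_le_add le_rfl ?_)
  rw [abs_mul, abs_of_nonneg ha1]
  exact mul_le_mul_of_nonneg_left hg ha1

lemma abs_Flux_zero_le (hS : Scheme m d T K sol Psi) (hSt : Stable m d K sol)
    (ha0 : 0 ≤ d.alpha0) (ha1 : 0 ≤ d.alpha1) (hk : k < K) (u : Sp) :
    |Flux m d u (Psi (k + 1)) (sol u (k + 1)) 0| ≤ d.boundaryFluxBound u := by
  have hs := hSt u (k + 1) hk 0 (Nat.zero_le _)
  have ⟨_, _, _, _, _, hflux0, _⟩ := hS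
  have hF : Flux m d u (Psi (k + 1)) (sol u (k + 1)) 0 =
      d.gamma0 u (Psi (k + 1) 0) - d.beta0 u (Psi (k + 1) 0) * sol u (k + 1) 0 := by
    linarith [hflux0 u k hk]
  rw [hF, Data.boundaryFluxBound]
  refine (d.abs_gamma0_sub_beta0_mul_le u _ hs.1 hs.2).trans ?_
  have := d.m0_pos u; have := d.k0_pos u; have := d.m1_pos u; have := d.k1_pos u
  have := hS.abs_Psi_zero_le hSt ha0 ha1 hk
  gcongr ?_ * _
  · exact (d.umax_pos u).le
  refine le_add_of_le_of_nonneg ?_ (by positivity)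
  gcongr

lemma abs_Flux_last_le (hS : Scheme m d T K sol Psi) (hSt : Stable m d K sol)
    (ha0 : 0 ≤ d.alpha0) (ha1 : 0 ≤ d.alpha1) (hk : k < K) (u : Sp) :
    |Flux m d u (Psi (k + 1)) (sol u (k + 1)) m.I| ≤ d.boundaryFluxBound u := by
  have hs := hSt u (k + 1) hk (m.I + 1) le_rfl
  have ⟨_, _, _, _, _, _, hflux1⟩ := hS
  rw [hflux1 u k hk, Data.boundaryFluxBound]
  refine (d.abs_beta1_mul_sub_gamma1_le u _ hs.1 hs.2).trans ?_
  have := d.m0_pos u; have := d.k0_pos u; have := d.m1_pos u; have := d.k1_pos u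
  have := hS.abs_V_sub_Psi_last_le hSt ha0 ha1 hk
  gcongr ?_ * _
  · exact (d.umax_pos u).le
  refine le_add_of_nonneg_of_le (by positivity) ?_
  gcongr

lemma epsu_mul_sum_eq (hS : Scheme m d T K sol Psi) (hk : k < K) (u : Sp) (v : ℕ → ℝ) :
    d.epsu u * ∑ i ∈ Finset.Icc 1 m.I, m.h i * ((sol u (k + 1) i - sol u k i) / (T / K) * v i) =
      m.fluxPairing (Flux m d u (Psi (k + 1)) (sol u (k + 1))) v := by
  rw [Finset.mul_sum, ← neg_neg (m.fluxPairing _ v), ← m.sum_Icc_flux_sub_mul,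
    ← Finset.sum_neg_distrib]
  obtain ⟨-, -, hbalance, -⟩ := hS
  refine Finset.sum_congr rfl fun i hi => ?_
  linear_combination v i * hbalance u k hk i (Finset.mem_Icc.1 hi).1 (Finset.mem_Icc.1 hi).2

lemma normDual_sub_le (hS : Scheme m d T K sol Psi) (hSt : Stable m d K sol)
    (heps : 0 < d.eps) (ha0 : 0 ≤ d.alpha0) (ha1 : 0 ≤ d.alpha1) (hk : k < K) (u : Sp) :
    m.normDual (fun i => (sol u (k + 1) i - sol u k i) / (T / K)) ≤
      (d.epsu u)⁻¹ * (Real.exp (3 * d.gradPsiBound) * √(m.gradSq (sol u (k + 1))) +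
        3 * d.gradPsiBound * d.umax u + 2 * d.boundaryFluxBound u) := by
  have hε := d.epsu_pos heps u
  have hM := d.gradPsiBound_nonneg ha1
  have hF : ∀ i ≤ m.I, |Flux m d u (Psi (k + 1)) (sol u (k + 1)) i| ≤
      Real.exp (3 * d.gradPsiBound) * |sol u (k + 1) (i + 1) - sol u (k + 1) i| / m.hp i +
        3 * d.gradPsiBound * d.umax u := fun i hi =>
    abs_Flux_le d u hi (hS.abs_dPsiF_le hSt ha0 ha1 hk hi) (hSt u (k + 1) hk (i + 1) (by omega)).1
      (hSt u (k + 1) hk (i + 1) (by omega)).2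
  refine m.normDual_le fun v hv => ?_
  rw [← inv_mul_cancel_left₀ hε.ne' (∑ i ∈ Finset.Icc 1 m.I, _), hS.epsu_mul_sum_eq hk u v]
  refine mul_le_mul_of_nonneg_left ?_ (inv_nonneg.2 hε.le)
  exact Mesh.fluxPairing_le (Real.exp_pos _).le (by have := d.umax_pos u; positivity) hF
    (hS.abs_Flux_zero_le hSt ha0 ha1 hk u) (hS.abs_Flux_last_le hSt ha0 ha1 hk u) hv

/-- Test the scheme with `u^{k+1}`. -/
lemma energy_step_le (hS : Scheme m d T K sol Psi) (hSt : Stable m d K sol)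
    (heps : 0 < d.eps) (ha0 : 0 ≤ d.alpha0) (ha1 : 0 ≤ d.alpha1) (hT : 0 < T) (hk : k < K)
    (u : Sp) :
    d.epsu u * (m.norm0sq (sol u (k + 1)) - m.norm0sq (sol u k)) +
        T / K * (Real.exp (-(3 * d.gradPsiBound)) * m.gradSq (sol u (k + 1))) ≤
      T / K * (2 * d.energyRate u) := by
  have hτ : 0 < T / K := div_pos hT (by exact_mod_cast Nat.zero_lt_of_lt hk)
  have hε := d.epsu_pos heps u
  have hM := d.gradPsiBound_nonneg ha1
  have hF : ∀ i ≤ m.I, Flux m d u (Psi (k + 1)) (sol u (k + 1)) i *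
      (sol u (k + 1) (i + 1) - sol u (k + 1) i) ≤
        -(Real.exp (-(3 * d.gradPsiBound)) * (sol u (k + 1) (i + 1) - sol u (k + 1) i) ^ 2 /
          m.hp i) + 3 * d.gradPsiBound * d.umax u * |sol u (k + 1) (i + 1) - sol u (k + 1) i| :=
    fun i hi => Flux_mul_sub_le d u hi (hS.abs_dPsiF_le hSt ha0 ha1 hk hi)
      (hSt u (k + 1) hk (i + 1) (by omega)).1 (hSt u (k + 1) hk (i + 1) (by omega)).2
  have habs {i : ℕ} (hi : i ≤ m.I + 1) : |sol u (k + 1) i| ≤ d.umax u := by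
    obtain ⟨h0, hU⟩ := hSt u (k + 1) hk i hi
    rwa [abs_of_nonneg h0]
  have hdiss := Mesh.fluxPairing_self_le (Real.exp_pos _)
    (by have := d.umax_pos u; positivity) hF (hS.abs_Flux_zero_le hSt ha0 ha1 hk u)
    (hS.abs_Flux_last_le hSt ha0 ha1 hk u) (habs (Nat.zero_le _)) (habs le_rfl)
  have hrescale :
      ∑ i ∈ Finset.Icc 1 m.I, m.h i * ((sol u (k + 1) i - sol u k i) * sol u (k + 1) i) =
        T / K * ∑ i ∈ Finset.Icc 1 m.I,
          m.h i * ((sol u (k + 1) i - sol u k i) / (T / K) * sol u (k + 1) i) := by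
    have hK0 : (K : ℝ) ≠ 0 := by exact_mod_cast (Nat.zero_lt_of_lt hk).ne'
    rw [Finset.mul_sum]
    exact Finset.sum_congr rfl fun i _ => by field_simp
  have hchain := mul_le_mul_of_nonneg_left (m.norm0sq_sub_le (sol u (k + 1)) (sol u k)) hε.le
  rw [hrescale, mul_left_comm, mul_left_comm (d.epsu u), hS.epsu_mul_sum_eq hk u] at hchain
  have := mul_le_mul_of_nonneg_left hdiss (mul_nonneg zero_le_two hτ.le)
  rw [Data.energyRate]
  linarith

lemma sum_gradSq_le (hS : Scheme m d T K sol Psi) (hSt : Stable m d K sol)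
    (heps : 0 < d.eps) (ha0 : 0 ≤ d.alpha0) (ha1 : 0 ≤ d.alpha1) (hT : 0 < T) (hK : 0 < K)
    (u : Sp) :
    ∑ k ∈ Finset.range K, T / K * m.gradSq (sol u (k + 1)) ≤ d.energyBound T u := by
  have hε := d.epsu_pos heps u
  have hb := Real.exp_pos (-(3 * d.gradPsiBound))
  have hsum := sum_le_of_forall_step_le (Q := fun k => m.norm0sq (sol u k))
    (fun k hk => hS.energy_step_le hSt heps ha0 ha1 hT hk u)
    (mul_nonneg hε.le (m.norm0sq_nonneg _))
  have hQ0 : m.norm0sq (sol u 0) ≤ d.umax u ^ 2 := m.norm0sq_le fun i _ hi => by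
    obtain ⟨h0, hU⟩ := hSt u 0 (Nat.zero_le K) i (by omega)
    rwa [abs_of_nonneg h0]
  have hK' : (K : ℝ) * (T / K * (2 * d.energyRate u)) = 2 * T * d.energyRate u := by
    field_simp
  have hD : ∑ k ∈ Finset.range K,
      T / K * (Real.exp (-(3 * d.gradPsiBound)) * m.gradSq (sol u (k + 1))) =
        Real.exp (-(3 * d.gradPsiBound)) *
          ∑ k ∈ Finset.range K, T / K * m.gradSq (sol u (k + 1)) := by
    rw [Finset.mul_sum]
    exact Finset.sum_congr rfl fun k _ => by ring
  rw [hD, hK'] at hsum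
  rw [Data.energyBound, le_div_iff₀ hb]
  linarith [mul_le_mul_of_nonneg_left hQ0 hε.le]

lemma sum_normDual_sq_le (hS : Scheme m d T K sol Psi) (hSt : Stable m d K sol)
    (heps : 0 < d.eps) (ha0 : 0 ≤ d.alpha0) (ha1 : 0 ≤ d.alpha1) (hT : 0 < T) (hK : 0 < K)
    (u : Sp) :
    ∑ k ∈ Finset.range K,
        T / K * m.normDual (fun i => (sol u (k + 1) i - sol u k i) / (T / K)) ^ 2 ≤
      d.dualBound T u := by
  set A := Real.exp (3 * d.gradPsiBound)
  set c := 3 * d.gradPsiBound * d.umax u + 2 * d.boundaryFluxBound u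
  have hε := d.epsu_pos heps u
  have hτ : 0 < T / K := div_pos hT (by exact_mod_cast hK)
  have hc : 0 ≤ c := by
    have := d.gradPsiBound_nonneg ha1; have := d.umax_pos u; have := d.boundaryFluxBound_pos u
    positivity
  have hstep : ∀ k ∈ Finset.range K,
      T / K * m.normDual (fun i => (sol u (k + 1) i - sol u k i) / (T / K)) ^ 2 ≤
        (2 * A ^ 2 * (T / K * m.gradSq (sol u (k + 1))) + 2 * c ^ 2 * (T / K)) / d.epsu u ^ 2 :=
    fun k hk => by
      have hle := hS.normDual_sub_le hSt heps ha0 ha1 (Finset.mem_range.1 hk) u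
      rw [add_assoc, le_inv_mul_iff₀ hε] at hle
      have hsq := pow_le_pow_left₀ (mul_nonneg hε.le (m.normDual_nonneg _)) hle 2
      have hG := Real.sq_sqrt (m.gradSq_nonneg (sol u (k + 1)))
      have hY : (A * √(m.gradSq (sol u (k + 1))) + c) ^ 2 ≤
          2 * A ^ 2 * m.gradSq (sol u (k + 1)) + 2 * c ^ 2 := by
        nlinarith [sq_nonneg (A * √(m.gradSq (sol u (k + 1))) - c)]
      rw [le_div_iff₀ (by positivity)]
      nlinarith [mul_le_mul_of_nonneg_left (hsq.trans hY) hτ.le]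
  refine (Finset.sum_le_sum hstep).trans ?_
  rw [← Finset.sum_div, Finset.sum_add_distrib, ← Finset.mul_sum, Finset.sum_const,
    Finset.card_range, nsmul_eq_mul, Data.dualBound]
  have hK' : (K : ℝ) * (2 * c ^ 2 * (T / K)) = 2 * c ^ 2 * T := by
    field_simp
  rw [hK']
  gcongr
  exact hS.sum_gradSq_le hSt heps ha0 ha1 hT hK u

end Scheme

end Corrosion

open Corrosion in
theorem discrete_time_derivative_estimate_general
    (d : Data) (heps : 0 < d.eps) (ha0 : 0 < d.alpha0) (ha1 : 0 < d.alpha1)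
    (T : ℝ) (hT : 0 < T) :
    ∃ C : ℝ, 0 < C ∧ ∀ (K : ℕ), 1 ≤ K → ∀ (m : Mesh)
      (sol : Sp → ℕ → ℕ → ℝ) (Psi : ℕ → ℕ → ℝ),
      Scheme m d T K sol Psi → Stable m d K sol →
      ∀ u : Sp,
        (∑ k ∈ Finset.range K, T / K *
          (m.normDual (fun i => (sol u (k + 1) i - sol u k i) / (T / K))) ^ 2) ≤ C := by
  refine ⟨max (d.dualBound T Sp.P) (d.dualBound T Sp.N),
    lt_max_of_lt_left (d.dualBound_pos heps ha1.le hT _), ?_⟩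
  intro K hK m sol Psi hS hSt u
  refine (hS.sum_normDual_sq_le hSt heps ha0.le ha1.le hT hK u).trans ?_
  cases u
  · exact le_max_left _ _
  · exact le_max_right _ _

open Corrosion in
/-- estimate on the dual norm of the discrete time derivatives. -/
theorem discrete_time_derivative_estimate
    (d : Data) (heps : 0 < d.eps) (ha0 : 0 < d.alpha0) (ha1 : 0 < d.alpha1) (hH : d.HypH)
    (T : ℝ) (hT : 0 < T) :
    ∃ C : ℝ, 0 < C ∧ ∀ (K : ℕ), 1 ≤ K → ∀ (m : Mesh)
      (sol : Sp → ℕ → ℕ → ℝ) (Psi : ℕ → ℕ → ℝ),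
      Scheme m d T K sol Psi → Stable m d K sol →
      ∀ u : Sp,
        (∑ k ∈ Finset.range K, T / K *
          (m.normDual (fun i => (sol u (k + 1) i - sol u k i) / (T / K))) ^ 2) ≤ C :=
  discrete_time_derivative_estimate_general d heps ha0 ha1 T hT
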